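/- Let (T_t)_{t≥0} be a positive contraction semigroup on real Lᵖ(X, dx), 1 ≤ p < ∞. Suppose f ≥ 0 satisfies T_t f = f for all t > 0 and has support S. If E ⊆ X is an invariant Borel set for the semigroup (i.e. supp(g) ⊆ E implies supp(T_t g) ⊆ E for all t ≥ 0 and g ∈ Lᵖ), then S \ E is also an invariant set. -/

import Mathlib

/-!
Split `f = f·1_E + f·1_{Eᶜ}`. As `E` is invariant, `T_t (f·1_E)` vanishes off `E`, so
`T_t (f·1_{Eᶜ})` agrees with `f·1_{Eᶜ}` off `E`; since `T_t` is an `Lᵖ` contraction and `p < ∞`,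
the `p`-th power of the norm splits over `E` and `Eᶜ`, which forces `T_t (f·1_{Eᶜ})` to vanish on
`E`. Hence `f·1_{Eᶜ} ≥ 0` is again fixed, and its support is `S \ E`. Finally the support of a
nonnegative fixed point `φ` of a positive semigroup is invariant: `|g|` supported there is the
`Lᵖ`-limit of `|g| ⊓ nφ`, and `0 ≤ T_t (|g| ⊓ nφ) ≤ nφ`, while `|T_t g| ≤ T_t |g|`.
-/

open MeasureTheory Filter

/-- `A` is an invariant set for the family `T` on real `Lᵖ`: every function
supported (a.e.) in `A` has all its images `T t g`, `t ≥ 0`, supported in `A`. -/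
def IsInvariantSet {X : Type*} [MeasurableSpace X] {μ : Measure X} {p : ENNReal}
    [Fact (1 ≤ p)] (T : ℝ → Lp ℝ p μ →L[ℝ] Lp ℝ p μ) (A : Set X) : Prop :=
  ∀ g : Lp ℝ p μ, (∀ᵐ x ∂μ, x ∉ A → g x = 0) →
    ∀ t : ℝ, 0 ≤ t → ∀ᵐ x ∂μ, x ∉ A → (T t g) x = 0

open scoped Topology ENNReal NNReal

theorem abs_map_le_map_abs {α β F : Type*} [AddCommGroup α] [Lattice α] [IsOrderedAddMonoid α]
    [AddCommGroup β] [Lattice β] [IsOrderedAddMonoid β] [FunLike F α β]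
    [AddMonoidHomClass F α β] (f : F) (hf : ∀ a, 0 ≤ a → 0 ≤ f a) (a : α) : |f a| ≤ f |a| := by
  have hmono := (monotone_iff_map_nonneg f).2 hf
  exact abs_le'.2 ⟨hmono (le_abs_self a), by simpa using hmono (neg_le_abs a)⟩

namespace MeasureTheory

variable {X F : Type*} [MeasurableSpace X] {μ : Measure X} {p : ℝ≥0∞} [NormedAddCommGroup F]

theorem eLpNorm_rpow_eq_add_compl (hp0 : p ≠ 0) (hp : p ≠ ∞) {s : Set X}
    (hs : MeasurableSet s) (f : X → F) :
    eLpNorm f p μ ^ p.toReal =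
      eLpNorm f p (μ.restrict s) ^ p.toReal + eLpNorm f p (μ.restrict sᶜ) ^ p.toReal := by
  lift p to ℝ≥0 using hp
  have hp0' : p ≠ 0 := by exact_mod_cast hp0
  simp only [ENNReal.coe_toReal, eLpNorm_nnreal_pow_eq_lintegral hp0']
  exact (lintegral_add_compl _ hs).symm

namespace Lp

theorem isClosed_setOf_ae_eq_zero_off [Fact (1 ≤ p)] (A : Set X) :
    IsClosed {g : Lp F p μ | ∀ᵐ x ∂μ, x ∉ A → g x = 0} := by
  refine IsSeqClosed.isClosed fun g g₀ hg hlim ↦ ?_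
  obtain ⟨φ, -, hφ⟩ := (tendstoInMeasure_of_tendsto_Lp hlim).exists_seq_tendsto_ae
  filter_upwards [ae_all_iff.2 hg, hφ] with x hgx hφx hxA
  exact tendsto_nhds_unique hφx (tendsto_const_nhds.congr fun n ↦ (hgx _ hxA).symm)

theorem tendsto_of_tendsto_ae_of_dominated [Fact (1 ≤ p)] (hp : p ≠ ∞) {f : ℕ → Lp F p μ}
    {g : Lp F p μ} {w : X → ℝ} (hw : MemLp w p μ)
    (hbound : ∀ n, ∀ᵐ x ∂μ, ‖f n x - g x‖ ≤ w x)
    (hlim : ∀ᵐ x ∂μ, Tendsto (fun n ↦ f n x) atTop (𝓝 (g x))) :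
    Tendsto f atTop (𝓝 g) := by
  rw [tendsto_Lp_iff_tendsto_eLpNorm']
  have hp0 : p ≠ 0 := (zero_lt_one.trans_le Fact.out).ne'
  lift p to ℝ≥0 using hp
  have hp0' : (0 : ℝ) < p := by simpa [pos_iff_ne_zero] using hp0
  simp_rw [eLpNorm_nnreal_eq_lintegral (by exact_mod_cast hp0 : p ≠ 0)]
  have hL : Tendsto (fun n ↦ ∫⁻ x, ‖f n x - g x‖ₑ ^ (p : ℝ) ∂μ) atTop (𝓝 (∫⁻ _, 0 ∂μ)) := by
    refine tendsto_lintegral_of_dominated_convergence' (fun x ↦ ‖w x‖ₑ ^ (p : ℝ))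
      (fun n ↦ ((Lp.aestronglyMeasurable (f n)).sub (Lp.aestronglyMeasurable g)).enorm.pow_const _)
      (fun n ↦ ?_) (lintegral_rpow_enorm_lt_top_of_eLpNorm_lt_top hp0 ENNReal.coe_ne_top hw.2).ne
      ?_
    · filter_upwards [hbound n] with x hx
      gcongr
      exact enorm_le_iff_norm_le.2 (hx.trans (Real.le_norm_self _))
    · filter_upwards [hlim] with x hx
      have := ((ENNReal.continuous_rpow_const (y := p)).tendsto _).comp
        ((continuous_enorm.tendsto _).comp (tendsto_sub_nhds_zero_iff.2 hx))
      simpa [Function.comp_def, ENNReal.zero_rpow_of_pos hp0'] using this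
  simpa [Function.comp_def, ENNReal.zero_rpow_of_pos (inv_pos.2 hp0')] using
    ((ENNReal.continuous_rpow_const (y := 1 / (p : ℝ))).tendsto _).comp hL

theorem ae_eq_zero_off_of_abs_le {A : Set X} {a b : Lp ℝ p μ} (hab : |a| ≤ b)
    (hb : ∀ᵐ x ∂μ, x ∉ A → b x = 0) : ∀ᵐ x ∂μ, x ∉ A → a x = 0 := by
  rw [← Lp.coeFn_le] at hab
  filter_upwards [hab, Lp.coeFn_abs a, hb] with x hx habs hbx hxA
  rw [habs, hbx hxA] at hx
  exact abs_nonpos_iff.1 hx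

theorem tendsto_inf_natCast_smul [Fact (1 ≤ p)] (hp : p ≠ ∞) {u φ : Lp ℝ p μ} (hu : 0 ≤ u)
    (hφ : 0 ≤ φ) (huφ : ∀ᵐ x ∂μ, φ x = 0 → u x = 0) :
    Tendsto (fun n : ℕ ↦ u ⊓ (n : ℝ) • φ) atTop (𝓝 u) := by
  rw [← Lp.coeFn_nonneg] at hu hφ
  have hcoe : ∀ᵐ x ∂μ, ∀ n : ℕ, (u ⊓ (n : ℝ) • φ) x = min (u x) (n * φ x) := by
    refine ae_all_iff.2 fun n ↦ ?_
    filter_upwards [Lp.coeFn_inf u ((n : ℝ) • φ), Lp.coeFn_smul (n : ℝ) φ] with x h1 h2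
    simp [h1, h2]
  refine tendsto_of_tendsto_ae_of_dominated hp (Lp.memLp u) (fun n ↦ ?_) ?_
  · filter_upwards [hcoe, hu, hφ] with x hx (hux : 0 ≤ u x) (hφx : 0 ≤ φ x)
    have := le_min hux (mul_nonneg n.cast_nonneg hφx)
    rw [hx n, Real.norm_eq_abs, abs_sub_comm, abs_of_nonneg (sub_nonneg.2 (min_le_left _ _))]
    linarith
  · filter_upwards [hcoe, hφ, huφ] with x hx hφx huφx
    simp_rw [hx]
    rcases (hφx : 0 ≤ φ x).eq_or_lt with h | h
    · simp [← h, huφx h.symm]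
    · refine tendsto_const_nhds.congr' ?_
      filter_upwards [tendsto_natCast_atTop_atTop.eventually_ge_atTop (u x / φ x)] with n hn
      rw [min_eq_left ((div_le_iff₀ h).1 hn)]

theorem ae_eq_zero_off_map_of_positive [Fact (1 ≤ p)] (hp : p ≠ ∞)
    (S : Lp ℝ p μ →L[ℝ] Lp ℝ p μ) (hS : ∀ g, 0 ≤ g → 0 ≤ S g) {φ : Lp ℝ p μ} (hφ : 0 ≤ φ)
    {A : Set X} (hAφ : ∀ᵐ x ∂μ, x ∈ A → φ x ≠ 0) (hSφ : ∀ᵐ x ∂μ, x ∉ A → S φ x = 0)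
    {g : Lp ℝ p μ} (hg : ∀ᵐ x ∂μ, x ∉ A → g x = 0) : ∀ᵐ x ∂μ, x ∉ A → S g x = 0 := by
  have hgφ : ∀ᵐ x ∂μ, φ x = 0 → |g| x = 0 := by
    filter_upwards [Lp.coeFn_abs g, hg, hAφ] with x habs hgx hAφx hφx
    rw [habs, hgx fun hxA ↦ hAφx hxA hφx, abs_zero]
  have htrunc (n : ℕ) : ∀ᵐ x ∂μ, x ∉ A → S (|g| ⊓ (n : ℝ) • φ) x = 0 := by
    refine ae_eq_zero_off_of_abs_le (b := S ((n : ℝ) • φ)) ?_ ?_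
    · have hnφ : 0 ≤ (n : ℝ) • φ := by rw [Nat.cast_smul_eq_nsmul]; exact nsmul_nonneg hφ n
      rw [abs_of_nonneg (hS _ (le_inf (abs_nonneg g) hnφ))]
      exact (monotone_iff_map_nonneg S).2 hS inf_le_right
    · rw [map_smul]
      filter_upwards [Lp.coeFn_smul (n : ℝ) (S φ), hSφ] with x hx hSφx hxA
      simp [hx, hSφx hxA]
  have hlim : Tendsto (fun n : ℕ ↦ S (|g| ⊓ (n : ℝ) • φ)) atTop (𝓝 (S |g|)) :=
    (S.continuous.tendsto _).comp (tendsto_inf_natCast_smul hp (abs_nonneg g) hφ hgφ)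
  exact ae_eq_zero_off_of_abs_le (abs_map_le_map_abs S hS g)
    ((isClosed_setOf_ae_eq_zero_off A).mem_of_tendsto hlim (Eventually.of_forall htrunc))

theorem eq_of_norm_le_of_ae_eq_compl [Fact (1 ≤ p)] (hp : p ≠ ∞) {s : Set X}
    (hs : MeasurableSet s) {u v : Lp F p μ} (hnorm : ‖u‖ ≤ ‖v‖) (hv : ∀ᵐ x ∂μ, x ∈ s → v x = 0)
    (huv : ∀ᵐ x ∂μ, x ∉ s → u x = v x) : u = v := by
  have hp0 : p ≠ 0 := (zero_lt_one.trans_le Fact.out).ne'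
  have hq : 0 < p.toReal := ENNReal.toReal_pos hp0 hp
  have hvs : eLpNorm v p (μ.restrict s) = 0 :=
    (eLpNorm_congr_ae ((ae_restrict_iff' hs).2 hv)).trans eLpNorm_zero
  have hsc : eLpNorm u p (μ.restrict sᶜ) = eLpNorm v p (μ.restrict sᶜ) :=
    eLpNorm_congr_ae ((ae_restrict_iff' hs.compl).2 huv)
  have hfin : eLpNorm v p (μ.restrict sᶜ) ^ p.toReal ≠ ∞ :=
    ENNReal.rpow_ne_top_of_nonneg hq.le
      ((eLpNorm_restrict_le _ _ _ _).trans_lt (Lp.eLpNorm_lt_top v)).ne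
  have hle : eLpNorm u p μ ^ p.toReal ≤ eLpNorm v p μ ^ p.toReal := by
    gcongr
    exact (ENNReal.toReal_le_toReal (Lp.eLpNorm_ne_top u) (Lp.eLpNorm_ne_top v)).1 hnorm
  rw [eLpNorm_rpow_eq_add_compl hp0 hp hs u, eLpNorm_rpow_eq_add_compl hp0 hp hs v, hvs, hsc,
    ENNReal.zero_rpow_of_pos hq] at hle
  have hus : eLpNorm u p (μ.restrict s) = 0 :=
    (ENNReal.rpow_eq_zero_iff_of_pos hq).1 (nonpos_iff_eq_zero.1
      (ENNReal.le_of_add_le_add_right hfin hle))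
  have hus' := (ae_restrict_iff' hs).1
    ((eLpNorm_eq_zero_iff (Lp.aestronglyMeasurable u).restrict hp0).1 hus)
  ext1
  filter_upwards [hus', hv, huv] with x hux hvx huvx
  by_cases hxs : x ∈ s
  · rw [hux hxs, hvx hxs, Pi.zero_apply]
  · exact huvx hxs

noncomputable def indicator {s : Set X} (hs : MeasurableSet s) (f : Lp F p μ) : Lp F p μ :=
  ((Lp.memLp f).indicator hs).toLp _

theorem coeFn_indicator {s : Set X} (hs : MeasurableSet s) (f : Lp F p μ) :
    ⇑(indicator hs f) =ᵐ[μ] s.indicator f :=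
  MemLp.coeFn_toLp _

theorem indicator_add_indicator_compl {s : Set X} (hs : MeasurableSet s) (f : Lp F p μ) :
    indicator hs f + indicator hs.compl f = f := by
  ext1
  filter_upwards [Lp.coeFn_add (indicator hs f) (indicator hs.compl f), coeFn_indicator hs f,
    coeFn_indicator hs.compl f] with x hx h₁ h₂
  rw [hx, Pi.add_apply, h₁, h₂, Set.indicator_self_add_compl_apply]

theorem map_indicator_compl_eq_of_map_eq [Fact (1 ≤ p)] {G : Type*}
    [FunLike G (Lp F p μ) (Lp F p μ)] [AddMonoidHomClass G (Lp F p μ) (Lp F p μ)] (hp : p ≠ ∞)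
    {s : Set X} (hs : MeasurableSet s) (S : G) (hS : ∀ g, ‖S g‖ ≤ ‖g‖)
    (hSs : ∀ g : Lp F p μ, (∀ᵐ x ∂μ, x ∉ s → g x = 0) → ∀ᵐ x ∂μ, x ∉ s → S g x = 0)
    {f : Lp F p μ} (hf : S f = f) : S (indicator hs.compl f) = indicator hs.compl f := by
  have hcompl := coeFn_indicator hs.compl f
  have hsplit := Lp.coeFn_add (S (indicator hs f)) (S (indicator hs.compl f))
  rw [← map_add, indicator_add_indicator_compl, hf] at hsplit
  have hSind : ∀ᵐ x ∂μ, x ∉ s → S (indicator hs f) x = 0 := by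
    refine hSs _ ?_
    filter_upwards [coeFn_indicator hs f] with x hx hxs
    rw [hx, Set.indicator_of_notMem hxs]
  refine eq_of_norm_le_of_ae_eq_compl hp hs (hS _) ?_ ?_
  · filter_upwards [hcompl] with x hx hxs
    rw [hx, Set.indicator_of_notMem (Set.notMem_compl_iff.2 hxs)]
  · filter_upwards [hsplit, hSind, hcompl] with x hx hSx hcx hxs
    rw [hcx, Set.indicator_of_mem (Set.mem_compl hxs), hx, Pi.add_apply, hSx hxs, zero_add]

end Lp

end MeasureTheory

theorem support_diff_invariant
    {X : Type*} [MeasurableSpace X] (μ : Measure X)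
    (p : ENNReal) [Fact (1 ≤ p)] (hp : p ≠ ⊤)
    (T : ℝ → Lp ℝ p μ →L[ℝ] Lp ℝ p μ)
    (hT0 : T 0 = 1)
    (hcontr : ∀ t : ℝ, 0 ≤ t → ∀ g, ‖T t g‖ ≤ ‖g‖)
    (hpos : ∀ t : ℝ, 0 ≤ t → ∀ g : Lp ℝ p μ, 0 ≤ g → 0 ≤ T t g)
    (f : Lp ℝ p μ) (hf0 : 0 ≤ f) (hfix : ∀ t : ℝ, 0 < t → T t f = f)
    (E : Set X) (hE : MeasurableSet E) (hEinv : IsInvariantSet T E) :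
    IsInvariantSet T ({x | f x ≠ 0} \ E) := by
  set f' := Lp.indicator hE.compl f
  have hf' := Lp.coeFn_indicator hE.compl f
  have hf'0 : 0 ≤ f' := by
    rw [← Lp.coeFn_nonneg]
    filter_upwards [hf', (Lp.coeFn_nonneg f).2 hf0] with x hx (hfx : 0 ≤ f x)
    rw [hx]
    exact Set.indicator_nonneg (fun _ _ ↦ hfx) x
  have hfix' (t : ℝ) (ht : 0 ≤ t) : T t f' = f' := by
    rcases ht.eq_or_lt with rfl | ht
    · rw [hT0]; rfl
    · exact Lp.map_indicator_compl_eq_of_map_eq hp hE (T t) (hcontr t ht.le)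
        (fun g hg ↦ hEinv g hg t ht.le) (hfix t ht)
  intro g hg t ht
  refine Lp.ae_eq_zero_off_map_of_positive hp (T t) (hpos t ht) hf'0 ?_ ?_ hg
  · filter_upwards [hf'] with x hx ⟨hfx, hxE⟩
    rwa [hx, Set.indicator_of_mem hxE]
  · rw [hfix' t ht]
    filter_upwards [hf'] with x hx hxA
    rw [hx, Set.indicator_apply_eq_zero]
    exact fun hxE ↦ not_not.1 fun hfx ↦ hxA ⟨hfx, hxE⟩
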